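/- Centered spatial-lag score identity: under the SAR model Y = S(Zγ₀ + ε) with S = (I − ϑ₀W)⁻¹ deterministic, Z deterministic, and errors ε₁,…,εₙ independent with E[ψ(εᵢ/σ₀)] = 0 and E[ψ(εᵢ/σ₀)εᵢ] = σ₀κ, the expectation E[ψ(εᵢ/σ₀)·(WY)ᵢ] equals (WS)ᵢᵢ·σ₀·κ, so the bias-corrected score ψ(εᵢ/σ₀)(WY)ᵢ − (WS)ᵢᵢσ₀κ has mean zero. -/

import Mathlib

open MeasureTheory ProbabilityTheory

/-!
Writing `S = (1 - ϑ₀ W)⁻¹`, the response is linear in the errors, `(W Y)ᵢ = ∑ₖ (W S)ᵢₖ (mₖ + εₖ)`,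
so the expectation splits into the moments `E[ψ(εᵢ/σ₀)(mₖ + εₖ)]`. Since `ψ(εᵢ/σ₀)` is centered,
the constant `mₖ` contributes nothing, and for `k ≠ i` independence kills `E[ψ(εᵢ/σ₀) εₖ]`;
only the diagonal term `(W S)ᵢᵢ E[ψ(εᵢ/σ₀) εᵢ] = (W S)ᵢᵢ σ₀ κ` survives.
-/

section

open Matrix

variable {Ω : Type*} [MeasurableSpace Ω] {μ : Measure Ω}

theorem integral_mul_mulVec_apply {ι κ : Type*} [Fintype ι] (A : Matrix κ ι ℝ)
    (g : Ω → ℝ) (X : Ω → ι → ℝ) (hX : ∀ k, Integrable (fun ω => g ω * X ω k) μ) (i : κ) :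
    ∫ ω, g ω * (A *ᵥ X ω) i ∂μ = ∑ k, A i k * ∫ ω, g ω * X ω k ∂μ := by
  simp_rw [mulVec, dotProduct, Finset.mul_sum, mul_left_comm (g _)]
  rw [integral_finsetSum _ fun k _ => (hX k).const_mul _]
  simp_rw [integral_const_mul]

theorem integral_mul_const_add_of_integral_eq_zero {g X : Ω → ℝ} (hg : Integrable g μ)
    (hgX : Integrable (fun ω => g ω * X ω) μ) (hg0 : ∫ ω, g ω ∂μ = 0) (c : ℝ) :
    ∫ ω, g ω * (c + X ω) ∂μ = ∫ ω, g ω * X ω ∂μ := by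
  simp_rw [mul_add]
  rw [integral_add (hg.mul_const c) hgX, integral_mul_const, hg0, zero_mul, zero_add]

theorem ProbabilityTheory.IndepFun.integral_mul_eq_zero_of_integral_eq_zero {g X : Ω → ℝ}
    (hgX : IndepFun g X μ) (hg : AEStronglyMeasurable g μ) (hX : AEStronglyMeasurable X μ)
    (hg0 : ∫ ω, g ω ∂μ = 0) :
    ∫ ω, g ω * X ω ∂μ = 0 := by
  rw [hgX.integral_fun_mul_eq_mul_integral hg hX, hg0, zero_mul]

theorem integral_mul_const_add_eq_ite {ι : Type*} [DecidableEq ι] {g : Ω → ℝ} {ε : ι → Ω → ℝ}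
    {i : ι} (hind : ∀ k ≠ i, IndepFun g (ε k) μ) (hg : Integrable g μ)
    (hε : ∀ k, AEStronglyMeasurable (ε k) μ) (hgε : ∀ k, Integrable (fun ω => g ω * ε k ω) μ)
    (hg0 : ∫ ω, g ω ∂μ = 0) (m : ι → ℝ) (k : ι) :
    ∫ ω, g ω * (m k + ε k ω) ∂μ = if k = i then ∫ ω, g ω * ε i ω ∂μ else 0 := by
  rw [integral_mul_const_add_of_integral_eq_zero hg (hgε k) hg0]
  split_ifs with hk
  · rw [hk]
  · exact (hind k hk).integral_mul_eq_zero_of_integral_eq_zero hg.1 (hε k) hg0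

end

theorem spatial_lag_score_identity_general {Ω : Type*} [MeasurableSpace Ω]
    (μ : Measure Ω) {n : ℕ}
    (W : Matrix (Fin n) (Fin n) ℝ) (ϑ₀ : ℝ)
    (m : Fin n → ℝ)
    (ε : Fin n → Ω → ℝ) (hmeas : ∀ i, Measurable (ε i))
    (hindep : iIndepFun ε μ)
    (σ₀ κ : ℝ) (ψ : ℝ → ℝ) (hψ : Measurable ψ)
    (hint1 : ∀ i, Integrable (fun ω => ψ (ε i ω / σ₀)) μ)
    (hint3 : ∀ i k, Integrable (fun ω => ψ (ε i ω / σ₀) * ε k ω) μ)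
    (hzero : ∀ i, ∫ ω, ψ (ε i ω / σ₀) ∂μ = 0)
    (hmom : ∀ i, ∫ ω, ψ (ε i ω / σ₀) * ε i ω ∂μ = σ₀ * κ)
    (Y : Ω → Fin n → ℝ)
    (hY : ∀ ω, Y ω = ((1 - ϑ₀ • W)⁻¹).mulVec (m + fun k => ε k ω))
    (i : Fin n) :
    ∫ ω, ψ (ε i ω / σ₀) * (W.mulVec (Y ω)) i ∂μ
      = (W * (1 - ϑ₀ • W)⁻¹) i i * σ₀ * κ := by
  set S := (1 - ϑ₀ • W)⁻¹
  have hscore : Measurable fun x => ψ (x / σ₀) := hψ.comp (measurable_id.div_const σ₀)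
  have hind : ∀ k ≠ i, IndepFun (fun ω => ψ (ε i ω / σ₀)) (ε k) μ := fun k hk =>
    (hindep.indepFun hk.symm).comp hscore measurable_id
  have hmoment := integral_mul_const_add_eq_ite hind (hint1 i)
    (fun k => (hmeas k).aestronglyMeasurable) (hint3 i) (hzero i) m
  calc ∫ ω, ψ (ε i ω / σ₀) * (W.mulVec (Y ω)) i ∂μ
      = ∫ ω, ψ (ε i ω / σ₀) * ((W * S).mulVec (m + fun k => ε k ω)) i ∂μ := by
        simp_rw [hY, Matrix.mulVec_mulVec]
    _ = ∑ k, (W * S) i k * ∫ ω, ψ (ε i ω / σ₀) * (m k + ε k ω) ∂μ :=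
        integral_mul_mulVec_apply _ _ _ (fun k => ((hint1 i).mul_const (m k)).add (hint3 i k)
          |>.congr (.of_forall fun ω => (mul_add _ _ _).symm)) i
    _ = (W * S) i i * σ₀ * κ := by
        simp_rw [hmoment, mul_ite, mul_zero, Finset.sum_ite_eq', Finset.mem_univ, if_true, hmom,
          mul_assoc]

/-- Centered spatial-lag score identity for the SAR model `Y = S(m + ε)` with
`S = (I − ϑ₀W)⁻¹`: `E[ψ(εᵢ/σ₀)·(WY)ᵢ] = (WS)ᵢᵢ·σ₀·κ`. -/
theorem spatial_lag_score_identity {Ω : Type*} [MeasurableSpace Ω]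
    (μ : Measure Ω) [IsProbabilityMeasure μ] {n : ℕ}
    (W : Matrix (Fin n) (Fin n) ℝ) (ϑ₀ : ℝ) (hUnit : IsUnit (1 - ϑ₀ • W))
    (m : Fin n → ℝ)
    (ε : Fin n → Ω → ℝ) (hmeas : ∀ i, Measurable (ε i))
    (hindep : iIndepFun ε μ)
    (σ₀ κ : ℝ) (hσ : 0 < σ₀) (ψ : ℝ → ℝ) (hψ : Measurable ψ)
    (hint1 : ∀ i, Integrable (fun ω => ψ (ε i ω / σ₀)) μ)
    (hint2 : ∀ i, Integrable (ε i) μ)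
    (hint3 : ∀ i k, Integrable (fun ω => ψ (ε i ω / σ₀) * ε k ω) μ)
    (hzero : ∀ i, ∫ ω, ψ (ε i ω / σ₀) ∂μ = 0)
    (hmom : ∀ i, ∫ ω, ψ (ε i ω / σ₀) * ε i ω ∂μ = σ₀ * κ)
    (Y : Ω → Fin n → ℝ)
    (hY : ∀ ω, Y ω = ((1 - ϑ₀ • W)⁻¹).mulVec (m + fun k => ε k ω))
    (i : Fin n) :
    ∫ ω, ψ (ε i ω / σ₀) * (W.mulVec (Y ω)) i ∂μ
      = (W * (1 - ϑ₀ • W)⁻¹) i i * σ₀ * κ :=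
  spatial_lag_score_identity_general μ W ϑ₀ m ε hmeas hindep σ₀ κ ψ hψ hint1 hint3 hzero hmom Y hY i
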